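/- For the weight function w(i,j) = j/i, every decreasing integer jumping pattern from n to 1 with k jumps has total weight at least k·n^{1/k}, and k·n^{1/k} ≥ e·ln(n) for all k ≥ 1 and n ≥ 1; hence the minimal cost b(n) ≥ e·ln(n). -/

import Mathlib

/-!
A pattern `n = b₀ > ⋯ > b_k = 1` has ratios `bᵢ / bᵢ₊₁` whose product telescopes to `n`, so by
AM-GM its weight is at least `k n^{1/k}`. Since `e t ≤ exp t`, taking `t = log n / k` gives
`k n^{1/k} ≥ e log n`. For `b(n)` it suffices that `e log` is a potential for the weights:
`e log n - e log m = e log (n/m) ≤ n/m = w(m, n)`, so `e log n` cannot exceed the cost of any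
pattern.
-/

/-- Minimal cost `b(n)` of a jumping pattern from `n` down to `1`:
`b(1)=0` and `b(n) = min_{1 <= k < n} (w(k,n) + b(k))`. -/
noncomputable def minCost (w : ℕ → ℕ → ℝ) : ℕ → ℝ
  | 0 => 0
  | 1 => 0
  | (n+2) =>
    ((Finset.Icc 1 (n+1)).attach).inf'
      ⟨⟨1, by simp⟩, Finset.mem_attach _ _⟩
      (fun k => w k.1 (n+2) + minCost w k.1)
decreasing_by
  have := Finset.mem_Icc.mp k.2; omega

/-- The lexicographically-first cost-minimizing jump sequence. -/
noncomputable def jumpSeq (w : ℕ → ℕ → ℝ) : ℕ → ℕ := fun n =>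
  if n ≤ 1 then 1
  else sInf {k | 1 ≤ k ∧ k < n ∧ w k n + minCost w k = minCost w n}

open Real Finset

lemma exp_one_mul_log_le_mul_rpow_one_div {x k : ℝ} (hx : 0 ≤ x) (hk : 0 < k) :
    exp 1 * log x ≤ k * x ^ (1 / k) := by
  rcases hx.eq_or_lt with rfl | hx
  · simp [zero_rpow (inv_ne_zero hk.ne')]
  have h : exp 1 * (log x / k) ≤ exp (log x / k) := exp_one_mul_le_exp
  calc exp 1 * log x = k * (exp 1 * (log x / k)) := by field_simp
    _ ≤ k * exp (log x / k) := by gcongr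
    _ = k * x ^ (1 / k) := by rw [rpow_def_of_pos hx, mul_one_div]

lemma exp_one_mul_log_le_self {x : ℝ} (hx : 0 ≤ x) : exp 1 * log x ≤ x := by
  simpa using exp_one_mul_log_le_mul_rpow_one_div hx one_pos

lemma prod_range_div_of_pos {a : ℕ → ℝ} {k : ℕ} (ha : ∀ i ≤ k, 0 < a i) :
    ∏ i ∈ range k, a i / a (i + 1) = a 0 / a k := by
  induction k with
  | zero => simp [(ha 0 le_rfl).ne']
  | succ k ih =>
    rw [prod_range_succ, ih fun i hi => ha i (by omega),
      div_mul_div_cancel₀ (ha k (by omega)).ne']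

lemma mul_rpow_one_div_le_sum_div {a : ℕ → ℝ} {k : ℕ} (hk : k ≠ 0) (ha : ∀ i ≤ k, 0 < a i) :
    k * (a 0 / a k) ^ (1 / (k : ℝ)) ≤ ∑ i ∈ range k, a i / a (i + 1) := by
  have hk' : (0 : ℝ) < k := by positivity
  have amgm := geom_mean_le_arith_mean (range k) (fun _ => 1) (fun i => a i / a (i + 1))
    (fun _ _ => zero_le_one) (by simpa using hk') fun i hi =>
      have hi := mem_range.1 hi
      (div_pos (ha i (by omega)) (ha (i + 1) (by omega))).le
  simp only [rpow_one, one_mul, sum_const, card_range, nsmul_eq_mul, mul_one,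
    prod_range_div_of_pos ha] at amgm
  rwa [one_div, ← le_div_iff₀' hk']

lemma le_minCost_of_le_add {w : ℕ → ℕ → ℝ} {g : ℕ → ℝ} (h0 : g 0 ≤ 0) (h1 : g 1 ≤ 0)
    (hg : ∀ m n, 1 ≤ m → m < n → g n ≤ w m n + g m) (n : ℕ) : g n ≤ minCost w n := by
  induction n using Nat.strong_induction_on with
  | _ n ih =>
    match n with
    | 0 => simpa [minCost] using h0
    | 1 => simpa [minCost] using h1
    | m + 2 =>
      rw [minCost]
      refine le_inf' _ _ fun ⟨k, hk⟩ _ => ?_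
      obtain ⟨hk1, hkm⟩ := mem_Icc.mp hk
      calc g (m + 2) ≤ w k (m + 2) + g k := hg k (m + 2) hk1 (by omega)
        _ ≤ w k (m + 2) + minCost w k := by gcongr; exact ih k (by omega)

lemma exp_one_mul_log_le_minCost (n : ℕ) :
    exp 1 * log n ≤ minCost (fun i j : ℕ => (j : ℝ) / i) n := by
  refine le_minCost_of_le_add (g := fun n => exp 1 * log n) (by simp) (by simp)
    (fun m n hm hmn => ?_) n
  have hm' : (0 : ℝ) < m := Nat.cast_pos.2 hm
  have hn' : (0 : ℝ) < n := Nat.cast_pos.2 (by omega)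
  have := exp_one_mul_log_le_self (div_pos hn' hm').le
  rw [log_div hn'.ne' hm'.ne'] at this
  linarith

theorem stmt_17 (w : ℕ → ℕ → ℝ) (hw : ∀ i j : ℕ, w i j = (j : ℝ) / (i : ℝ))
    (n : ℕ) :
    (∀ k : ℕ, 1 ≤ k → ∀ b : ℕ → ℕ, b 0 = n → b k = 1 →
      (∀ i < k, b (i+1) < b i) → (∀ i ≤ k, 1 ≤ b i) →
        (k : ℝ) * (n : ℝ) ^ ((1 : ℝ) / k) ≤
          ∑ i ∈ Finset.range k, (b i : ℝ) / (b (i+1) : ℝ)) ∧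
    (∀ k : ℕ, 1 ≤ k → Real.exp 1 * Real.log n ≤ (k : ℝ) * (n : ℝ) ^ ((1 : ℝ) / k)) ∧
    Real.exp 1 * Real.log n ≤ minCost w n := by
  have hw' : w = fun i j : ℕ => (j : ℝ) / i := funext₂ hw
  refine ⟨fun k hk b hb0 hbk _ hb => ?_, fun k hk => ?_, hw' ▸ exp_one_mul_log_le_minCost n⟩
  · have := mul_rpow_one_div_le_sum_div (a := fun i => (b i : ℝ)) (k := k) (by omega)
      fun i hi => by exact_mod_cast hb i hi
    simpa [hb0, hbk] using this
  · exact exp_one_mul_log_le_mul_rpow_one_div n.cast_nonneg (by exact_mod_cast hk)
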